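/- Let A_n^alt be the directed graph of type A_n in which every vertex is a source or a sink (edge orientations alternate along the path). Then |HK_{A_n^alt}| = F_{2n+1}, the (2n+1)-st Fibonacci number (with F₁ = F₂ = 1). Equivalently, the cardinalities f_n = |HK_{A_n^alt}| satisfy f₀ = 1, f₁ = 2, and f_{n+1} = 3f_n − f_{n−1}. -/

import Mathlib

/-- One-step Hecke-Kiselman edge relations for a directed graph with edge relation `E`. -/
def HKRel {V : Type*} (E : V → V → Prop) : FreeMonoid V → FreeMonoid V → Prop := fun a b =>
  (∃ x : V, a = FreeMonoid.of x * FreeMonoid.of x ∧ b = FreeMonoid.of x) ∨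
  (∃ x y : V, x ≠ y ∧ ¬ E x y ∧ ¬ E y x ∧
    a = FreeMonoid.of x * FreeMonoid.of y ∧ b = FreeMonoid.of y * FreeMonoid.of x) ∨
  (∃ x y : V, E x y ∧ ¬ E y x ∧
    a = FreeMonoid.of x * FreeMonoid.of y * FreeMonoid.of x ∧
    b = FreeMonoid.of y * FreeMonoid.of x * FreeMonoid.of y) ∨
  (∃ x y : V, E x y ∧ ¬ E y x ∧
    a = FreeMonoid.of x * FreeMonoid.of y * FreeMonoid.of x ∧
    b = FreeMonoid.of x * FreeMonoid.of y) ∨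
  (∃ x y : V, E x y ∧ E y x ∧
    a = FreeMonoid.of x * FreeMonoid.of y * FreeMonoid.of x ∧
    b = FreeMonoid.of y * FreeMonoid.of x * FreeMonoid.of y)

/-- The congruence on the free monoid generated by the Hecke-Kiselman relations. -/
def HKCon {V : Type*} (E : V → V → Prop) : Con (FreeMonoid V) := conGen (HKRel E)

/-- The Hecke-Kiselman monoid of the directed graph `(V, E)`. -/
def HK {V : Type*} (E : V → V → Prop) := (HKCon E).Quotient

instance {V : Type*} (E : V → V → Prop) : Monoid (HK E) :=
  inferInstanceAs (Monoid (HKCon E).Quotient)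

/-- The canonical quotient map. -/
def HKmk {V : Type*} (E : V → V → Prop) : FreeMonoid V →* HK E := (HKCon E).mk'

/-- The content of an element: vertices occurring in some representing word. -/
def elemContent {V : Type*} (E : V → V → Prop) (x : HK E) : Set V :=
  {v | ∃ w : FreeMonoid V, HKmk E w = x ∧ v ∈ FreeMonoid.toList w}

/-- The alternating orientation of the path on `n` vertices: edges go between consecutive
vertices, always directed away from the even-indexed vertex, so every vertex is a source
or a sink. -/
def altE (n : ℕ) (i j : Fin n) : Prop :=
  ((j : ℕ) = (i : ℕ) + 1 ∨ (i : ℕ) = (j : ℕ) + 1) ∧ Even (i : ℕ)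

/-
Write `x i` for the generator of vertex `i`; even vertices are sources and odd ones are sinks. In
any Hecke-Kiselman monoid a source `x` satisfies `x a x = x a`, and a sink `y` satisfies
`y a y = a y`, for every `a`. Call a datum a set `S` of vertices with an orientation of every edge
inside `S`, and attach to it a word in which each vertex of `S` occurs once, in an order compatible
with the orientation. By the two absorption rules, left multiplication by `x g` sends the element
of a datum to the element of another datum: `g` is moved in front of its neighbours, unless `g` is
a sink already in `S`, in which case nothing changes. Hence every element comes from a datum. The
same rule is an action of the monoid on data, and the element of a datum sends the empty datum to
that datum, so distinct data give distinct elements. To count the data, let `f n` count them on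
`n` vertices and `g n` count those on `n + 1` vertices whose set contains the last vertex.
Splitting on the last vertex and its neighbour gives `f (n + 1) = f n + g n` and
`g (n + 1) = f n + 2 g n`, the recurrences satisfied by `F (2n + 1)` and `F (2n + 2)`.
-/

theorem Nat.card_subtype_eq_card_and_add_card_and_not {α : Type*} (p q : α → Prop)
    [Finite {a // p a}] :
    Nat.card {a // p a} = Nat.card {a // p a ∧ q a} + Nat.card {a // p a ∧ ¬q a} := by
  classical
  rw [← Nat.card_congr (Equiv.subtypeSubtypeEquivSubtypeInter p q),
    ← Nat.card_congr (Equiv.subtypeSubtypeEquivSubtypeInter p (¬q ·)), ← Nat.card_sum,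
    Nat.card_congr (Equiv.sumCompl _)]

namespace HK

variable {V : Type*} {E : V → V → Prop}

def of (E : V → V → Prop) (v : V) : HK E := HKmk E (FreeMonoid.of v)

@[elab_as_elim]
theorem induction_on {P : HK E → Prop} (x : HK E) (one : P 1)
    (of_mul : ∀ v x, P x → P (of E v * x)) : P x := by
  obtain ⟨w, rfl⟩ := (HKCon E).mk'_surjective x
  induction w using FreeMonoid.recOn with
  | one => exact one
  | of_mul v w ih => exact of_mul v _ ih

theorem mk_eq_mk_of_rel {a b : FreeMonoid V} (h : HKRel E a b) : HKmk E a = HKmk E b :=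
  (HKCon E).eq.2 (ConGen.Rel.of a b h)

theorem of_mul_self (v : V) : of E v * of E v = of E v := by
  simp only [of, ← map_mul]
  exact mk_eq_mk_of_rel (Or.inl ⟨v, rfl, rfl⟩)

theorem commute_of {x y : V} (hne : x ≠ y) (hxy : ¬E x y) (hyx : ¬E y x) :
    Commute (of E x) (of E y) := by
  simp only [Commute, SemiconjBy, of, ← map_mul]
  exact mk_eq_mk_of_rel (Or.inr (Or.inl ⟨x, y, hne, hxy, hyx, rfl, rfl⟩))

theorem of_mul_of_mul_of_eq_of_mul_of {x y : V} (hxy : E x y) (hyx : ¬E y x) :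
    of E x * of E y * of E x = of E x * of E y := by
  simp only [of, ← map_mul]
  exact mk_eq_mk_of_rel (Or.inr (Or.inr (Or.inr (Or.inl ⟨x, y, hxy, hyx, rfl, rfl⟩))))

theorem of_mul_of_mul_of_eq_of_mul_of' {x y : V} (hxy : E x y) (hyx : ¬E y x) :
    of E y * of E x * of E y = of E x * of E y := by
  rw [← of_mul_of_mul_of_eq_of_mul_of hxy hyx]
  simp only [of, ← map_mul]
  exact (mk_eq_mk_of_rel (Or.inr (Or.inr (Or.inl ⟨x, y, hxy, hyx, rfl, rfl⟩)))).symm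

theorem of_mul_mul_of_eq_of_mul {x : V} (hx : ∀ y, ¬E y x) (a : HK E) :
    of E x * a * of E x = of E x * a := by
  induction a using induction_on with
  | one => simp [of_mul_self]
  | of_mul z a ih =>
    by_cases hzx : z = x
    · subst hzx
      simp only [← mul_assoc, of_mul_self, ih]
    by_cases hxz : E x z
    · calc of E x * (of E z * a) * of E x
          = of E x * of E z * of E x * (a * of E x) := by
            rw [of_mul_of_mul_of_eq_of_mul_of hxz (hx z)]; simp only [mul_assoc]
        _ = of E x * of E z * (of E x * a * of E x) := by simp only [mul_assoc]
        _ = of E x * (of E z * a) := by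
            rw [ih, ← mul_assoc, of_mul_of_mul_of_eq_of_mul_of hxz (hx z), mul_assoc]
    · have hc := commute_of (E := E) (Ne.symm hzx) hxz (hx z)
      calc of E x * (of E z * a) * of E x = of E z * (of E x * a * of E x) := by
            rw [← mul_assoc, hc.eq]; simp only [mul_assoc]
        _ = of E x * (of E z * a) := by rw [ih, ← mul_assoc, ← hc.eq, mul_assoc]

theorem of_mul_mul_of_eq_mul_of {y : V} (hy : ∀ x, ¬E y x) (a : HK E) :
    of E y * a * of E y = a * of E y := by
  induction a using induction_on with
  | one => simp [of_mul_self]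
  | of_mul z a ih =>
    by_cases hzy : z = y
    · subst hzy
      simp only [← mul_assoc, of_mul_self]
    by_cases hzy' : E z y
    · calc of E y * (of E z * a) * of E y
          = of E y * of E z * (of E y * a * of E y) := by rw [ih]; simp only [mul_assoc]
        _ = of E y * of E z * of E y * (a * of E y) := by simp only [mul_assoc]
        _ = of E z * (of E y * a * of E y) := by
            rw [of_mul_of_mul_of_eq_of_mul_of' hzy' (hy z)]; simp only [mul_assoc]
        _ = of E z * a * of E y := by rw [ih, mul_assoc]
    · have hc := commute_of (E := E) (Ne.symm hzy) (hy z) hzy'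
      calc of E y * (of E z * a) * of E y = of E z * (of E y * a * of E y) := by
            rw [← mul_assoc, hc.eq]; simp only [mul_assoc]
        _ = of E z * a * of E y := by rw [ih, mul_assoc]

def lift {M : Type*} [Monoid M] (f : V → M) (idem : ∀ v, f v * f v = f v)
    (comm : ∀ x y, x ≠ y → ¬E x y → ¬E y x → f x * f y = f y * f x)
    (braid : ∀ x y, E x y → f x * f y * f x = f y * f x * f y)
    (absorb : ∀ x y, E x y → ¬E y x → f x * f y * f x = f x * f y) : HK E →* M :=
  (HKCon E).lift (FreeMonoid.lift f) <| Con.conGen_le.2 <| by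
    rintro a b (⟨x, rfl, rfl⟩ | ⟨x, y, hne, hxy, hyx, rfl, rfl⟩ | ⟨x, y, hxy, -, rfl, rfl⟩ |
      ⟨x, y, hxy, hyx, rfl, rfl⟩ | ⟨x, y, hxy, -, rfl, rfl⟩) <;>
      simp only [Con.ker_rel, map_mul, FreeMonoid.lift_eval_of]
    exacts [idem x, comm x y hne hxy hyx, braid x y hxy, absorb x y hxy hyx, braid x y hxy]

end HK

namespace HKAlt

open HK

variable {n : ℕ}

theorem not_altE_of_even {i j : Fin n} (hj : Even (j : ℕ)) : ¬altE n i j := by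
  rintro ⟨h | h, hi⟩ <;> simp_all [Nat.even_add_one]

theorem not_altE_of_odd {i j : Fin n} (hi : Odd (i : ℕ)) : ¬altE n i j :=
  fun h => Nat.not_even_iff_odd.2 hi h.2

theorem not_altE_of_val_add_one_ne {i j : Fin n} (h₁ : (i : ℕ) + 1 ≠ j) (h₂ : (j : ℕ) + 1 ≠ i) :
    ¬altE n i j := by
  rintro ⟨h | h, -⟩ <;> omega

theorem val_add_one_ne_of_not_altE {i j : Fin n} (hij : ¬altE n i j) (hji : ¬altE n j i) :
    (i : ℕ) + 1 ≠ j := by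
  intro h
  rcases Nat.even_or_odd (i : ℕ) with hi | hi
  · exact hij ⟨Or.inl h.symm, hi⟩
  · exact hji ⟨Or.inr h.symm, h ▸ hi.add_one⟩

/-- The generator of vertex `g`, with the junk value `1` for `g ≥ n`. -/
def gen (n g : ℕ) : HK (altE n) := if h : g < n then of (altE n) ⟨g, h⟩ else 1

theorem gen_of_lt {g : ℕ} (h : g < n) : gen n g = of (altE n) ⟨g, h⟩ := dif_pos h

theorem commute_gen {a g : ℕ} (h₁ : a + 1 ≠ g) (h₂ : g + 1 ≠ a) : Commute (gen n a) (gen n g) := by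
  obtain rfl | hne := eq_or_ne a g
  · exact Commute.refl _
  unfold gen
  split_ifs
  · exact commute_of (fun h => hne (congrArg Fin.val h))
      (not_altE_of_val_add_one_ne h₁ h₂) (not_altE_of_val_add_one_ne h₂ h₁)
  all_goals simp

theorem gen_mul_mul_gen_of_even {g : ℕ} (hg : Even g) (a : HK (altE n)) :
    gen n g * a * gen n g = gen n g * a := by
  unfold gen
  split_ifs
  · exact of_mul_mul_of_eq_of_mul (fun _ => not_altE_of_even hg) a
  · simp

theorem gen_mul_mul_gen_of_odd {g : ℕ} (hg : Odd g) (a : HK (altE n)) :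
    gen n g * a * gen n g = a * gen n g := by
  unfold gen
  split_ifs
  · exact of_mul_mul_of_eq_mul_of (fun _ => not_altE_of_odd hg) a
  · simp

def wordProd (n : ℕ) (l : List ℕ) : HK (altE n) := (l.map (gen n)).prod

@[simp]
theorem wordProd_nil : wordProd n [] = 1 := rfl

@[simp]
theorem wordProd_cons (a : ℕ) (l : List ℕ) : wordProd n (a :: l) = gen n a * wordProd n l := by
  simp [wordProd]

@[simp]
theorem wordProd_append (l l' : List ℕ) :
    wordProd n (l ++ l') = wordProd n l * wordProd n l' := by
  simp [wordProd]

theorem commute_gen_wordProd {g : ℕ} {l : List ℕ} (h : ∀ a ∈ l, a + 1 ≠ g ∧ g + 1 ≠ a) :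
    Commute (gen n g) (wordProd n l) :=
  Commute.list_prod_right _ _ <| by
    simpa using fun a ha => (commute_gen (n := n) (h a ha).1 (h a ha).2).symm

/-- A candidate normal form: `mem i` says that vertex `i` occurs, and for an edge `{j, j + 1}`
with both ends present `rev j` says that `j + 1` is written before `j`. -/
@[ext]
structure State where
  mem : ℕ → Bool
  rev : ℕ → Bool

namespace State

def empty : State := ⟨fun _ => false, fun _ => false⟩

def prepend (g : ℕ) (σ : State) : State where
  mem i := if i = g then true else σ.mem i
  rev j := if j + 1 = g then σ.mem j else if j = g then false else σ.rev j

/-- The effect of left multiplication by the generator of `g`. -/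
def push (g : ℕ) (σ : State) : State :=
  if Odd g ∧ σ.mem g then σ else σ.prepend g

theorem prepend_mem_self (g : ℕ) (σ : State) : (σ.prepend g).mem g := by simp [prepend]

theorem push_eq_prepend {g : ℕ} {σ : State} (h : ¬(Odd g ∧ σ.mem g)) :
    σ.push g = σ.prepend g :=
  if_neg h

theorem push_eq_self {g : ℕ} {σ : State} (hg : Odd g) (h : σ.mem g) : σ.push g = σ :=
  if_pos ⟨hg, h⟩

theorem push_eq_prepend_of_even {g : ℕ} {σ : State} (hg : Even g) : σ.push g = σ.prepend g :=
  push_eq_prepend fun h => Nat.not_odd_iff_even.2 hg h.1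

theorem mem_push (g i : ℕ) (σ : State) : (σ.push g).mem i ↔ i = g ∨ σ.mem i := by
  unfold push prepend
  split_ifs <;> grind

theorem push_push_self (g : ℕ) (σ : State) : (σ.push g).push g = σ.push g := by
  by_cases h : Odd g ∧ σ.mem g
  · rw [push_eq_self h.1 h.2, push_eq_self h.1 h.2]
  rw [push_eq_prepend h]
  rcases Nat.even_or_odd g with hg | hg
  · rw [push_eq_prepend_of_even hg]
    ext i <;> simp only [prepend] <;> split_ifs <;> simp_all
  · rw [push_eq_self hg (prepend_mem_self g σ)]

theorem push_comm {x y : ℕ} (hne : x ≠ y) (h₁ : x + 1 ≠ y) (h₂ : y + 1 ≠ x) (σ : State) :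
    (σ.push y).push x = (σ.push x).push y := by
  by_cases hx : Odd x ∧ σ.mem x
  · rw [push_eq_self hx.1 hx.2, push_eq_self hx.1 ((mem_push _ _ _).2 (Or.inr hx.2))]
  by_cases hy : Odd y ∧ σ.mem y
  · rw [push_eq_self hy.1 hy.2, push_eq_self hy.1 ((mem_push _ _ _).2 (Or.inr hy.2))]
  have hx' : ¬(Odd x ∧ (σ.push y).mem x) := by simpa [mem_push, hne] using hx
  have hy' : ¬(Odd y ∧ (σ.push x).mem y) := by simpa [mem_push, Ne.symm hne] using hy
  rw [push_eq_prepend hx', push_eq_prepend hy', push_eq_prepend hx, push_eq_prepend hy]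
  ext i <;> simp only [prepend] <;> split_ifs <;> simp_all

theorem push_push_push_of_even {x y : ℕ} (hx : Even x) (hxy : x + 1 = y ∨ y + 1 = x)
    (σ : State) : ((σ.push x).push y).push x = (σ.push y).push x := by
  by_cases hy : Odd y ∧ σ.mem y
  · rw [push_eq_self hy.1 ((mem_push _ _ _).2 (Or.inr hy.2)), push_eq_self hy.1 hy.2,
      push_push_self]
  have hy' : ¬(Odd y ∧ (σ.push x).mem y) := by
    rw [mem_push]; rintro ⟨hodd, rfl | h⟩
    · exact Nat.not_odd_iff_even.2 hx hodd
    · exact hy ⟨hodd, h⟩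
  rw [push_eq_prepend hy', push_eq_prepend hy, push_eq_prepend_of_even hx,
    push_eq_prepend_of_even hx, push_eq_prepend_of_even hx]
  ext i <;> simp only [prepend] <;> split_ifs <;> simp_all

theorem push_push_push_of_odd {x y : ℕ} (hy : Odd y) (σ : State) :
    ((σ.push y).push x).push y = (σ.push y).push x :=
  push_eq_self hy ((mem_push _ _ _).2 (Or.inr ((mem_push _ _ _).2 (Or.inl rfl))))

/-- At `k = 0` the test `σ.rev (k - 1)` reads the junk value `σ.rev 0`, which is harmless since
both branches give `[0]`. -/
def word (σ : State) : ℕ → List ℕ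
  | 0 => []
  | k + 1 => if σ.mem k then (if σ.rev (k - 1) then k :: σ.word k else σ.word k ++ [k])
      else σ.word k

theorem word_succ (σ : State) (k : ℕ) : σ.word (k + 1) =
    if σ.mem k then (if σ.rev (k - 1) then k :: σ.word k else σ.word k ++ [k]) else σ.word k :=
  rfl

theorem mem_word {σ : State} {k a : ℕ} : a ∈ σ.word k ↔ a < k ∧ σ.mem a := by
  induction k with
  | zero => simp [word]
  | succ k ih =>
    rw [word_succ]
    split_ifs <;> simp only [List.mem_cons, List.mem_append, ih] <;> grind

theorem word_empty (k : ℕ) : empty.word k = [] :=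
  List.eq_nil_iff_forall_not_mem.2 fun a ha => by simpa [empty] using (mem_word.1 ha).2

theorem word_congr {σ τ : State} {k : ℕ} (hm : ∀ i < k, σ.mem i = τ.mem i)
    (hr : ∀ j, j + 1 < k → σ.rev j = τ.rev j) : σ.word k = τ.word k := by
  induction k with
  | zero => rfl
  | succ k ih =>
    have hw : σ.word k = τ.word k :=
      ih (fun i hi => hm i (by omega)) (fun j hj => hr j (by omega))
    rcases k with _ | k
    · simp [word, hm 0 (by omega)]
    · rw [word_succ σ (k + 1), word_succ τ (k + 1), hw, hm (k + 1) (by omega),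
        Nat.add_sub_cancel, hr k (by omega)]

def Coherent (σ : State) : Prop := ∀ j, σ.rev j → σ.mem j ∧ σ.mem (j + 1)

def IsNormal (n : ℕ) (σ : State) : Prop := (∀ i, σ.mem i → i < n) ∧ σ.Coherent

theorem isNormal_empty (n : ℕ) : empty.IsNormal n := ⟨by simp [empty], by simp [Coherent, empty]⟩

theorem IsNormal.push {g : ℕ} {σ : State} (hσ : σ.IsNormal n) (hg : g < n) :
    (σ.push g).IsNormal n := by
  unfold State.push
  split_ifs
  · exact hσ
  · obtain ⟨h₁, h₂⟩ := hσ
    refine ⟨fun i => ?_, fun j => ?_⟩ <;> simp only [prepend]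
    · have := h₁ i; grind
    · have := h₂ j; grind

def trunc (σ : State) (k : ℕ) : State where
  mem i := if i < k then σ.mem i else false
  rev j := if j + 1 < k then σ.rev j else false

def addVertex (σ : State) (k : ℕ) : State := { σ with mem := fun i => if i = k then true else σ.mem i }

def setRev (σ : State) (j : ℕ) (b : Bool) : State :=
  { σ with rev := fun i => if i = j then b else σ.rev i }

theorem trunc_eq_self {σ : State} (hσ : σ.IsNormal n) : σ.trunc n = σ := by
  ext i
  · have := hσ.1 i
    simp only [trunc]; grind
  · have := hσ.2 i
    have := hσ.1 (i + 1)
    simp only [trunc]; grind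

theorem isNormal_trunc {σ : State} (hσ : σ.Coherent) (k : ℕ) : (σ.trunc k).IsNormal k := by
  refine ⟨fun i => ?_, fun j => ?_⟩ <;> simp only [trunc]
  · grind
  · have := hσ j; grind

theorem coherent_addVertex {σ : State} (hσ : σ.Coherent) (k : ℕ) : (σ.addVertex k).Coherent := by
  intro j hj
  have := hσ j hj
  simp only [addVertex]
  grind

theorem empty_push (k : ℕ) : empty.push k = empty.addVertex k := by
  ext i <;> simp [push, prepend, addVertex, empty]

theorem push_addVertex {g k : ℕ} (h : g < k) (σ : State) :
    (σ.addVertex k).push g = (σ.push g).addVertex k := by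
  have hg : (σ.addVertex k).mem g = σ.mem g := by simp [addVertex, h.ne]
  unfold push
  rw [hg]
  split_ifs
  · rfl
  · ext i <;> simp only [prepend, addVertex] <;> grind

theorem foldr_push_addVertex {k : ℕ} {l : List ℕ} (hl : ∀ a ∈ l, a < k) (σ : State) :
    l.foldr push (σ.addVertex k) = (l.foldr push σ).addVertex k := by
  induction l with
  | nil => rfl
  | cons a l ih =>
    simp only [List.forall_mem_cons] at hl
    simp only [List.foldr_cons, ih hl.2, push_addVertex hl.1]

theorem foldr_push_word {σ : State} (hσ : σ.Coherent) (k : ℕ) :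
    (σ.word k).foldr push empty = σ.trunc k := by
  induction k with
  | zero => ext <;> simp [word, empty, trunc]
  | succ k ih =>
    rw [word_succ]
    split_ifs with hk hr
    · have := hσ _ hr
      rw [List.foldr_cons, ih, push_eq_prepend (by simp [trunc])]
      ext i <;> simp only [prepend, trunc] <;> grind
    · rw [List.foldr_append, List.foldr_cons, List.foldr_nil, empty_push,
        foldr_push_addVertex (fun a ha => (mem_word.1 ha).1), ih]
      ext i <;> simp only [addVertex, trunc] <;> grind
    · rw [ih]
      have := hσ (k - 1)
      ext i <;> simp only [trunc] <;> grind

theorem finite_isNormal (n : ℕ) : Finite {σ : State // σ.IsNormal n} := by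
  refine Finite.of_injective (fun σ => (fun i : Fin n => σ.1.mem i, fun i : Fin n => σ.1.rev i))
    fun σ τ h => Subtype.ext ?_
  simp only [Prod.mk.injEq, funext_iff] at h
  rw [← trunc_eq_self σ.2, ← trunc_eq_self τ.2]
  ext i <;> simp only [trunc] <;> split_ifs with hi
  exacts [h.1 ⟨i, hi⟩, rfl, h.2 ⟨i, by omega⟩, rfl]

theorem isNormal_succ_and_not_mem_iff {σ : State} :
    σ.IsNormal (n + 1) ∧ ¬σ.mem n ↔ σ.IsNormal n := by
  constructor
  · rintro ⟨⟨h₁, h₂⟩, hn⟩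
    exact ⟨fun i hi => lt_of_le_of_ne (Nat.lt_succ_iff.1 (h₁ i hi)) (by rintro rfl; exact hn hi),
      h₂⟩
  · rintro ⟨h₁, h₂⟩
    exact ⟨⟨fun i hi => (h₁ i hi).trans (Nat.lt_succ_self n), h₂⟩, fun hn => (h₁ n hn).false⟩

def equivAbsentBelowTop (n : ℕ) :
    {σ : State // (σ.IsNormal (n + 2) ∧ σ.mem (n + 1)) ∧ ¬σ.mem n} ≃
      {σ : State // σ.IsNormal n} where
  toFun σ := ⟨σ.1.trunc n, isNormal_trunc σ.2.1.1.2 n⟩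
  invFun τ := ⟨τ.1.addVertex (n + 1), by
    refine ⟨⟨⟨fun i => ?_, coherent_addVertex τ.2.2 _⟩, by simp [addVertex]⟩, ?_⟩
    · have := τ.2.1 i
      simp only [addVertex]; grind
    · have := τ.2.1 n
      simp only [addVertex]; grind⟩
  left_inv σ := by
    obtain ⟨σ, ⟨⟨hb, hc⟩, htop⟩, hn⟩ := σ
    refine Subtype.ext ?_
    ext i <;> simp only [trunc, addVertex]
    · have := hb i; grind
    · have := hc i; have := hb (i + 1); grind
  right_inv τ := by
    obtain ⟨τ, hb, hc⟩ := τ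
    refine Subtype.ext ?_
    ext i <;> simp only [trunc, addVertex]
    · have := hb i; grind
    · have := hc i; have := hb (i + 1); grind

def equivPresentBelowTop (n : ℕ) :
    {σ : State // (σ.IsNormal (n + 2) ∧ σ.mem (n + 1)) ∧ σ.mem n} ≃
      {σ : State // σ.IsNormal (n + 1) ∧ σ.mem n} × Bool where
  toFun σ := (⟨σ.1.trunc (n + 1), isNormal_trunc σ.2.1.1.2 _, by simp [trunc, σ.2.2]⟩, σ.1.rev n)
  invFun τ := ⟨(τ.1.1.addVertex (n + 1)).setRev n τ.2, by
    obtain ⟨⟨τ, ⟨hb, hc⟩, hn⟩, b⟩ := τ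
    refine ⟨⟨⟨fun i => ?_, fun j => ?_⟩, by simp [addVertex, setRev]⟩,
      by simp [addVertex, setRev, hn]⟩
    · have := hb i
      simp only [addVertex, setRev]; grind
    · have := hc j
      simp only [addVertex, setRev]; grind⟩
  left_inv σ := by
    obtain ⟨σ, ⟨⟨hb, hc⟩, htop⟩, hn⟩ := σ
    refine Subtype.ext ?_
    ext i <;> simp only [trunc, addVertex, setRev]
    · have := hb i; grind
    · have := hc i; have := hb (i + 1); grind
  right_inv τ := by
    obtain ⟨⟨τ, ⟨hb, hc⟩, hn⟩, b⟩ := τ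
    refine Prod.ext (Subtype.ext ?_) (by simp [setRev])
    ext i <;> simp only [trunc, addVertex, setRev]
    · have := hb i; grind
    · have := hc i; have := hb (i + 1); grind

theorem card_isNormal_zero : Nat.card {σ : State // σ.IsNormal 0} = 1 := by
  refine Nat.card_eq_one_iff_unique.2 ⟨⟨fun σ τ => Subtype.ext ?_⟩, ⟨empty, isNormal_empty 0⟩⟩
  rw [← trunc_eq_self σ.2, ← trunc_eq_self τ.2]
  ext <;> simp [trunc]

theorem card_isNormal_one_and_mem_zero :
    Nat.card {σ : State // σ.IsNormal 1 ∧ σ.mem 0} = 1 := by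
  refine Nat.card_eq_one_iff_unique.2 ⟨⟨fun σ τ => Subtype.ext ?_⟩, ⟨empty.addVertex 0,
    ⟨fun i => by simp [addVertex, empty], coherent_addVertex (isNormal_empty 0).2 0⟩,
    by simp [addVertex]⟩⟩
  rw [← trunc_eq_self σ.2.1, ← trunc_eq_self τ.2.1]
  have := σ.2.2
  have := τ.2.2
  ext i <;> simp only [trunc] <;> grind

theorem card_isNormal_succ (n : ℕ) :
    Nat.card {σ : State // σ.IsNormal (n + 1)} =
      Nat.card {σ : State // σ.IsNormal n} +
        Nat.card {σ : State // σ.IsNormal (n + 1) ∧ σ.mem n} := by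
  have := finite_isNormal (n + 1)
  rw [Nat.card_subtype_eq_card_and_add_card_and_not _ fun σ : State => σ.mem n, add_comm,
    Nat.card_congr (Equiv.subtypeEquivRight fun _ => isNormal_succ_and_not_mem_iff)]

theorem card_isNormal_succ_and_mem_succ (n : ℕ) :
    Nat.card {σ : State // σ.IsNormal (n + 2) ∧ σ.mem (n + 1)} =
      Nat.card {σ : State // σ.IsNormal n} +
        2 * Nat.card {σ : State // σ.IsNormal (n + 1) ∧ σ.mem n} := by
  have := finite_isNormal (n + 2)
  have : Finite {σ : State // σ.IsNormal (n + 2) ∧ σ.mem (n + 1)} :=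
    Finite.of_equiv _ (Equiv.subtypeSubtypeEquivSubtypeInter _ _)
  rw [Nat.card_subtype_eq_card_and_add_card_and_not _ fun σ : State => σ.mem n, add_comm,
    Nat.card_congr (equivAbsentBelowTop n), Nat.card_congr (equivPresentBelowTop n),
    Nat.card_prod, Nat.card_eq_fintype_card (α := Bool), Fintype.card_bool, mul_comm]

theorem card_isNormal_eq_fib (n : ℕ) :
    Nat.card {σ : State // σ.IsNormal n} = Nat.fib (2 * n + 1) ∧
      Nat.card {σ : State // σ.IsNormal (n + 1) ∧ σ.mem n} = Nat.fib (2 * n + 2) := by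
  induction n with
  | zero => exact ⟨card_isNormal_zero, card_isNormal_one_and_mem_zero⟩
  | succ n ih =>
    have h₃ : Nat.fib (2 * n + 3) = Nat.fib (2 * n + 1) + Nat.fib (2 * n + 2) := Nat.fib_add_two
    have h₄ : Nat.fib (2 * n + 4) = Nat.fib (2 * n + 2) + Nat.fib (2 * n + 3) := Nat.fib_add_two
    rw [card_isNormal_succ, card_isNormal_succ_and_mem_succ, ih.1, ih.2,
      show 2 * (n + 1) + 1 = 2 * n + 3 by ring, show 2 * (n + 1) + 2 = 2 * n + 4 by ring]
    omega

end State

open State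

theorem gen_mul_mul_wordProd_word_succ {g : ℕ} {σ : State} (h : ¬(Odd g ∧ σ.mem g))
    (a : HK (altE n)) :
    gen n g * a * wordProd n (σ.word (g + 1)) = gen n g * a * wordProd n (σ.word g) := by
  have he : σ.mem g → Even g := fun hg => Nat.not_odd_iff_even.1 fun ho => h ⟨ho, hg⟩
  rw [word_succ]
  split_ifs with hg
  · rw [wordProd_cons, ← mul_assoc, gen_mul_mul_gen_of_even (he hg)]
  · rw [wordProd_append, wordProd_cons, wordProd_nil, mul_one, ← mul_assoc,
      mul_assoc (gen n g), gen_mul_mul_gen_of_even (he hg)]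
  · rfl

theorem wordProd_prepend_word_succ (g : ℕ) (σ : State) :
    wordProd n ((σ.prepend g).word (g + 1)) = gen n g * wordProd n (σ.word g) := by
  have hw : (σ.prepend g).word g = σ.word g :=
    word_congr (fun i hi => if_neg hi.ne) fun j hj => by
      simp only [prepend, if_neg (show j + 1 ≠ g by omega), if_neg (show j ≠ g by omega)]
  rw [word_succ, if_pos (prepend_mem_self g σ), hw]
  split_ifs with hr
  · rw [wordProd_cons]
  · rw [wordProd_append, wordProd_cons, wordProd_nil, mul_one]
    refine (commute_gen_wordProd fun a ha => ?_).eq.symm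
    obtain ⟨ha, hma⟩ := mem_word.1 ha
    refine ⟨fun hag => hr ?_, by omega⟩
    subst hag
    simp [prepend, hma]

theorem gen_mul_gen_succ_mul_wordProd_word_succ {g : ℕ} {σ : State} (h : ¬(Odd g ∧ σ.mem g)) :
    gen n g * (gen n (g + 1) * wordProd n (σ.word (g + 1))) =
      wordProd n ((σ.prepend g).word (g + 1)) * gen n (g + 1) := by
  have hc : Commute (gen n (g + 1)) (wordProd n (σ.word g)) :=
    commute_gen_wordProd fun a ha => by have := (mem_word.1 ha).1; omega
  rw [← mul_assoc, gen_mul_mul_wordProd_word_succ h, mul_assoc, hc.eq, wordProd_prepend_word_succ,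
    mul_assoc]

theorem gen_mul_wordProd_prepend_word {g k : ℕ} {σ : State} (h : ¬(Odd g ∧ σ.mem g))
    (hk : g < k) : gen n g * wordProd n (σ.word k) = wordProd n ((σ.prepend g).word k) := by
  induction k, (hk : g + 1 ≤ k) using Nat.le_induction with
  | base =>
    rw [← mul_one (gen n g), gen_mul_mul_wordProd_word_succ h, mul_one, wordProd_prepend_word_succ]
  | succ k hk ih =>
    have hmk : (σ.prepend g).mem k = σ.mem k := if_neg (show k ≠ g by omega)
    obtain rfl | hk := eq_or_lt_of_le hk
    · have hr : (σ.prepend g).rev g = false := by simp [prepend]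
      rw [word_succ σ, word_succ (σ.prepend g), hmk, Nat.add_sub_cancel, hr]
      simp only [Bool.false_eq_true, if_false]
      split_ifs
      · rw [wordProd_cons, gen_mul_gen_succ_mul_wordProd_word_succ h, wordProd_append,
          wordProd_cons, wordProd_nil, mul_one]
      · rw [wordProd_append, wordProd_append, ← mul_assoc, ih]
      · exact ih
    · have hr : (σ.prepend g).rev (k - 1) = σ.rev (k - 1) := by
        simp only [prepend, if_neg (show k - 1 + 1 ≠ g by omega), if_neg (show k - 1 ≠ g by omega)]
      rw [word_succ σ, word_succ (σ.prepend g), hmk, hr]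
      split_ifs
      · rw [wordProd_cons, wordProd_cons, ← ih, ← mul_assoc, ← mul_assoc,
          (commute_gen (by omega) (by omega)).eq]
      · rw [wordProd_append, wordProd_append, ← mul_assoc, ih]
      · exact ih

theorem gen_mul_wordProd_word {g k : ℕ} (σ : State) (hk : g < k) :
    gen n g * wordProd n (σ.word k) = wordProd n ((σ.push g).word k) := by
  by_cases h : Odd g ∧ σ.mem g
  · obtain ⟨u, v, huv⟩ := List.append_of_mem (mem_word.2 ⟨hk, h.2⟩)
    rw [push_eq_self h.1 h.2, huv, wordProd_append, wordProd_cons, ← mul_assoc, ← mul_assoc,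
      gen_mul_mul_gen_of_odd h.1, mul_assoc]
  · rw [push_eq_prepend h]
    exact gen_mul_wordProd_prepend_word h hk

theorem push_push_push_of_altE {x y : Fin n} (hxy : altE n x y) (σ : State) :
    ((σ.push x).push y).push x = (σ.push y).push x :=
  push_push_push_of_even hxy.2 (hxy.1.imp Eq.symm Eq.symm) σ

theorem push_push_push_of_altE' {x y : Fin n} (hxy : altE n x y) (σ : State) :
    ((σ.push y).push x).push y = (σ.push y).push x := by
  refine push_push_push_of_odd ?_ σ
  rcases hxy with ⟨h | h, hx⟩
  · exact h ▸ hx.add_one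
  · exact Nat.not_even_iff_odd.1 (Nat.even_add_one.1 (h ▸ hx))

def act (n : ℕ) : HK (altE n) →* Function.End State :=
  HK.lift (fun v => (State.push v : Function.End State)) (fun v => funext (push_push_self v))
    (fun _ _ hne hxy hyx => funext (push_comm (Fin.val_ne_of_ne hne)
      (val_add_one_ne_of_not_altE hxy hyx) (val_add_one_ne_of_not_altE hyx hxy)))
    (fun _ _ hxy => funext fun σ =>
      (push_push_push_of_altE hxy σ).trans (push_push_push_of_altE' hxy σ).symm)
    (fun _ _ hxy _ => funext (push_push_push_of_altE hxy))

theorem act_mul_apply (x y : HK (altE n)) (σ : State) :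
    act n (x * y) σ = act n x (act n y σ) := by
  rw [map_mul]; rfl

theorem act_gen {g : ℕ} (hg : g < n) (σ : State) : act n (gen n g) σ = σ.push g := by
  rw [gen_of_lt hg]
  rfl

theorem act_wordProd {l : List ℕ} (hl : ∀ a ∈ l, a < n) (σ : State) :
    act n (wordProd n l) σ = l.foldr State.push σ := by
  induction l with
  | nil => rfl
  | cons a l ih =>
    simp only [List.forall_mem_cons] at hl
    rw [wordProd_cons, act_mul_apply, ih hl.2, act_gen hl.1, List.foldr_cons]

theorem isNormal_act (x : HK (altE n)) : (act n x empty).IsNormal n := by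
  induction x using HK.induction_on with
  | one => exact isNormal_empty n
  | of_mul v x ih =>
    rw [← gen_of_lt v.isLt, act_mul_apply, act_gen v.isLt]
    exact ih.push v.isLt

theorem wordProd_word_act (x : HK (altE n)) : wordProd n ((act n x empty).word n) = x := by
  induction x using HK.induction_on with
  | one => rw [map_one]; exact congrArg _ (word_empty n)
  | of_mul v x ih =>
    rw [← gen_of_lt v.isLt, act_mul_apply, act_gen v.isLt, ← gen_mul_wordProd_word _ v.isLt, ih]

theorem act_wordProd_word {σ : State} (hσ : σ.IsNormal n) :
    act n (wordProd n (σ.word n)) empty = σ := by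
  rw [act_wordProd (fun a ha => (mem_word.1 ha).1), foldr_push_word hσ.2, trunc_eq_self hσ]

def equivNormal (n : ℕ) : HK (altE n) ≃ {σ : State // σ.IsNormal n} where
  toFun x := ⟨act n x empty, isNormal_act x⟩
  invFun σ := wordProd n (σ.1.word n)
  left_inv := wordProd_word_act
  right_inv σ := Subtype.ext (act_wordProd_word σ.2)

end HKAlt

/-- The Hecke-Kiselman monoid of the alternating orientation of the path on `n` vertices
has cardinality the odd Fibonacci number `F_{2n+1}` (with `F₁ = F₂ = 1`). -/
theorem hk_alternating_card_fib (n : ℕ) :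
    Nat.card (HK (altE n)) = Nat.fib (2 * n + 1) := by
  rw [Nat.card_congr (HKAlt.equivNormal n), (HKAlt.State.card_isNormal_eq_fib n).1]
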